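/- arXiv:2404.11693 — 3 statements merged into one kernel-verified Lean document; each statement's English description precedes it below -/
import Mathlib

section
/- Let p ∈ (1,∞), α < β real numbers, and V(t) = |(t−α)(t−β)|^p / p. Then the function q(t) = (α + β·e^{(β−α)t/(p−1)^{1/p}})/(1 + e^{(β−α)t/(p−1)^{1/p}}) is the unique heteroclinic solution of the problem −(|u'|^{p−2}u')' + V'(u) = 0 on ℝ with u(0) = (α+β)/2, u(t) → α as t → −∞ and u(t) → β as t → +∞; that is, q satisfies all these conditions and every twice differentiable function with continuous derivative satisfying them equals q. -/
open Real Filter Set MeasureTheory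

noncomputable def Phi (φ : ℝ → ℝ) (t : ℝ) : ℝ := ∫ s in (0:ℝ)..|t|, s * φ s

def IsClassicalSolution (φ V q : ℝ → ℝ) : Prop :=
  Differentiable ℝ q ∧
  ∀ t : ℝ, HasDerivAt
    (fun s => if deriv q s = 0 then 0 else φ |deriv q s| * deriv q s)
    (deriv V (q t)) t

def IsHeteroclinic (φ V : ℝ → ℝ) (α : ℝ) (q : ℝ → ℝ) : Prop :=
  IsClassicalSolution φ V q ∧ Differentiable ℝ (deriv q) ∧ Continuous (deriv q) ∧
  q 0 = 0 ∧ Tendsto q atTop (nhds α) ∧ Tendsto q atBot (nhds (-α))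

def IsHeteroclinicAB (φ V : ℝ → ℝ) (α β : ℝ) (q : ℝ → ℝ) : Prop :=
  IsClassicalSolution φ V q ∧ Differentiable ℝ (deriv q) ∧ Continuous (deriv q) ∧
  q 0 = (α + β) / 2 ∧ Tendsto q atBot (nhds α) ∧ Tendsto q atTop (nhds β)

/-!
Multiplying the equation by `u'` shows that the energy `(p - 1) / p * |u'| ^ p - V u` is
constant; writing the kinetic term as the Legendre dual `|w| ^ p' / p'` of the flux
`w = |u'| ^ (p - 2) * u'` (with `p'` the conjugate exponent) avoids differentiating `u'` itself.
Since `u → β`, the mean value theorem makes `u'` small along a sequence tending to `+∞`, so the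
energy is zero, i.e. `|u'| = |(u - α) * (u - β)| / k` with `k ^ p = p - 1`. Grönwall's inequality
keeps `u` away from the equilibria `α` and `β`, hence `α < u < β`; by Darboux `u'` has a constant
sign, which must be positive because `u → β`. So `u` solves the logistic equation
`u' = (u - α) * (β - u) / k`, whose solution through `(α + β) / 2` at `0` is
`α + (β - α) * sigmoid ((β - α) * t / k)`, and a direct computation shows that this function
solves the original equation.
-/

open scoped Topology

noncomputable def pFlux (p v : ℝ) : ℝ := |v| ^ (p - 2) * v

noncomputable def pEnergy (p : ℝ) (V u : ℝ → ℝ) (t : ℝ) : ℝ :=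
  (p - 1) / p * |deriv u t| ^ p - V (u t)

noncomputable def doubleWell (p α β x : ℝ) : ℝ := |(x - α) * (x - β)| ^ p / p

noncomputable def logisticProfile (α β k t : ℝ) : ℝ := α + (β - α) * sigmoid ((β - α) * t / k)

section Flux

variable {p : ℝ}

lemma pFlux_zero (p : ℝ) : pFlux p 0 = 0 := by simp [pFlux]

lemma pFlux_neg (p v : ℝ) : pFlux p (-v) = -pFlux p v := by simp [pFlux]

lemma pFlux_of_pos {v : ℝ} (hv : 0 < v) : pFlux p v = v ^ (p - 1) := by
  rw [pFlux, abs_of_pos hv, ← rpow_add_one hv.ne']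
  ring_nf

lemma abs_pFlux (hp : 1 < p) (v : ℝ) : |pFlux p v| = |v| ^ (p - 1) := by
  rcases eq_or_ne v 0 with rfl | hv
  · simp [pFlux, zero_rpow (by linarith : p - 1 ≠ 0)]
  · rw [pFlux, abs_mul, abs_of_nonneg (rpow_nonneg (abs_nonneg v) _),
      ← rpow_add_one (abs_ne_zero.mpr hv)]
    ring_nf

lemma pFlux_conjExponent_pFlux (hp : 1 < p) (v : ℝ) : pFlux p.conjExponent (pFlux p v) = v := by
  rcases eq_or_ne v 0 with rfl | hv
  · simp [pFlux]
  · have hv' : 0 < |v| := abs_pos.mpr hv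
    rw [pFlux, abs_pFlux hp, pFlux, ← rpow_mul hv'.le, ← mul_assoc, ← rpow_add hv',
      conjExponent]
    have : (p - 1) * (p / (p - 1) - 2) + (p - 2) = 0 := by
      field_simp [(by linarith : p - 1 ≠ 0)]; ring
    rw [this, rpow_zero, one_mul]

lemma abs_pFlux_rpow_conjExponent (hp : 1 < p) (v : ℝ) :
    |pFlux p v| ^ p.conjExponent / p.conjExponent = (p - 1) / p * |v| ^ p := by
  have hp1 : p - 1 ≠ 0 := by linarith
  rw [abs_pFlux hp, ← rpow_mul (abs_nonneg v), conjExponent,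
    mul_div_cancel₀ _ hp1]
  field_simp

end Flux

section Profile

variable {α β k : ℝ}

lemma logisticProfile_eq (α β k : ℝ) :
    (fun t => (α + β * exp ((β - α) * t / k)) / (1 + exp ((β - α) * t / k)))
      = logisticProfile α β k := by
  funext t
  have h : 0 < 1 + exp ((β - α) * t / k) := by positivity
  rw [logisticProfile, sigmoid_def, exp_neg]
  field_simp
  ring

lemma logisticProfile_zero : logisticProfile α β k 0 = (α + β) / 2 := by
  simp [logisticProfile]; ring

lemma logisticProfile_mem_Ioo (hαβ : α < β) (t : ℝ) : logisticProfile α β k t ∈ Ioo α β := by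
  have h0 := sigmoid_pos ((β - α) * t / k)
  have h1 := sigmoid_lt_one ((β - α) * t / k)
  constructor <;> simp only [logisticProfile] <;> nlinarith

lemma hasDerivAt_logisticProfile (hk : k ≠ 0) (t : ℝ) :
    HasDerivAt (logisticProfile α β k)
      ((logisticProfile α β k t - α) * (β - logisticProfile α β k t) / k) t := by
  have hlin := ((hasDerivAt_id t).const_mul (β - α)).div_const k
  have h := ((hasDerivAt_sigmoid _).comp t hlin).const_mul (β - α) |>.const_add α
  refine h.congr_deriv ?_
  simp only [logisticProfile, id]
  field_simp
  ring

lemma deriv_logisticProfile (hk : k ≠ 0) :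
    deriv (logisticProfile α β k)
      = fun t => (logisticProfile α β k t - α) * (β - logisticProfile α β k t) / k :=
  funext fun t => (hasDerivAt_logisticProfile hk t).deriv

lemma deriv_logisticProfile_pos (hαβ : α < β) (hk : 0 < k) (t : ℝ) :
    0 < deriv (logisticProfile α β k) t := by
  have hmem := logisticProfile_mem_Ioo (k := k) hαβ t
  rw [deriv_logisticProfile hk.ne']
  exact div_pos (mul_pos (sub_pos.2 hmem.1) (sub_pos.2 hmem.2)) hk

lemma hasDerivAt_deriv_logisticProfile (hk : k ≠ 0) (t : ℝ) :
    HasDerivAt (deriv (logisticProfile α β k))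
      (deriv (logisticProfile α β k) t * (α + β - 2 * logisticProfile α β k t) / k) t := by
  have hq := hasDerivAt_logisticProfile (α := α) (β := β) hk t
  rw [deriv_logisticProfile hk]
  exact ((hq.sub_const α).mul (hq.const_sub β)).div_const k |>.congr_deriv (by ring)

lemma tendsto_logisticProfile_atTop (hαβ : α < β) (hk : 0 < k) :
    Tendsto (logisticProfile α β k) atTop (𝓝 β) := by
  have hlin : Tendsto (fun t => (β - α) * t / k) atTop atTop :=
    (tendsto_id.const_mul_atTop (sub_pos.mpr hαβ)).atTop_div_const hk
  have h := ((tendsto_sigmoid_atTop.comp hlin).const_mul (β - α)).const_add α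
  rwa [mul_one, add_sub_cancel] at h

lemma tendsto_logisticProfile_atBot (hαβ : α < β) (hk : 0 < k) :
    Tendsto (logisticProfile α β k) atBot (𝓝 α) := by
  have hlin : Tendsto (fun t => (β - α) * t / k) atBot atBot :=
    (tendsto_id.const_mul_atBot (sub_pos.mpr hαβ)).atBot_div_const hk
  have h := ((tendsto_sigmoid_atBot.comp hlin).const_mul (β - α)).const_add α
  rwa [mul_zero, add_zero] at h

end Profile

lemma isClassicalSolution_rpow_iff {p : ℝ} {V u : ℝ → ℝ} :
    IsClassicalSolution (fun t => t ^ (p - 2)) V u ↔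
      Differentiable ℝ u ∧ ∀ t, HasDerivAt (fun s => pFlux p (deriv u s)) (deriv V (u t)) t := by
  have h : (fun s => if deriv u s = 0 then 0 else |deriv u s| ^ (p - 2) * deriv u s)
      = fun s => pFlux p (deriv u s) := by
    funext s
    split_ifs with hs
    · rw [hs, pFlux_zero]
    · rfl
  simp only [IsClassicalSolution, h]

lemma hasDerivAt_doubleWell {p : ℝ} (hp : 1 < p) (α β x : ℝ) :
    HasDerivAt (doubleWell p α β) (pFlux p ((x - α) * (x - β)) * (2 * x - α - β)) x := by
  have hw := ((hasDerivAt_id x).sub_const α).mul ((hasDerivAt_id x).sub_const β)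
  have h := ((hasDerivAt_abs_rpow ((x - α) * (x - β)) hp).comp x hw).div_const p
  refine h.congr_deriv ?_
  simp only [pFlux, id]
  field_simp [(by linarith : p ≠ 0)]
  ring

section Energy

variable {p : ℝ} {V u : ℝ → ℝ}

lemma pEnergy_eq_pEnergy (hp : 1 < p) (hV : Differentiable ℝ V) (hu : Differentiable ℝ u)
    (hflux : ∀ t, HasDerivAt (fun s => pFlux p (deriv u s)) (deriv V (u t)) t) (t s : ℝ) :
    pEnergy p V u t = pEnergy p V u s := by
  have hr : 1 < p.conjExponent := (HolderConjugate.conjExponent hp).symm.lt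
  have hE : ∀ t, HasDerivAt (pEnergy p V u) 0 t := by
    intro t
    have hkin := ((hasDerivAt_abs_rpow _ hr).div_const p.conjExponent).comp t (hflux t)
    have hpot := (hV (u t)).hasDerivAt.comp t (hu t).hasDerivAt
    have hfun : (fun s => |pFlux p (deriv u s)| ^ p.conjExponent / p.conjExponent - V (u s))
        = pEnergy p V u := by
      funext s
      rw [abs_pFlux_rpow_conjExponent hp, pEnergy]
    rw [← hfun]
    refine (hkin.sub hpot).congr_deriv ?_
    have hinv := pFlux_conjExponent_pFlux hp (deriv u t)
    rw [pFlux] at hinv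
    field_simp [(by linarith : p.conjExponent ≠ 0)]
    rw [hinv]
    ring
  exact is_const_of_deriv_eq_zero (fun s => (hE s).differentiableAt) (fun s => (hE s).deriv) t s

lemma exists_tendsto_deriv_comp_zero {b : ℝ} (hu : Differentiable ℝ u)
    (hlim : Tendsto u atTop (𝓝 b)) :
    ∃ ξ : ℝ → ℝ, Tendsto ξ atTop atTop ∧ Tendsto (fun t => deriv u (ξ t)) atTop (𝓝 0) := by
  have hmvt : ∀ t : ℝ, ∃ c ∈ Ioo t (t + 1), deriv u c = (u (t + 1) - u t) / (t + 1 - t) :=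
    fun t => exists_deriv_eq_slope u (lt_add_one t) hu.continuous.continuousOn
      (fun x _ => hu x |>.differentiableWithinAt)
  choose ξ hξ hξu using hmvt
  refine ⟨ξ, tendsto_atTop_mono (fun t => (hξ t).1.le) tendsto_id, ?_⟩
  have hshift : Tendsto (fun t => u (t + 1)) atTop (𝓝 b) :=
    hlim.comp (tendsto_atTop_add_const_right _ 1 tendsto_id)
  simpa [hξu] using hshift.sub hlim

lemma pEnergy_eq_zero {b : ℝ} (hp : 1 < p) (hV : Differentiable ℝ V) (hu : Differentiable ℝ u)
    (hflux : ∀ t, HasDerivAt (fun s => pFlux p (deriv u s)) (deriv V (u t)) t)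
    (hlim : Tendsto u atTop (𝓝 b)) (hVb : V b = 0) (t : ℝ) : pEnergy p V u t = 0 := by
  obtain ⟨ξ, hξ, hderiv⟩ := exists_tendsto_deriv_comp_zero hu hlim
  have hkin : Tendsto (fun s => |deriv u (ξ s)| ^ p) atTop (𝓝 0) := by
    simpa [zero_rpow (by linarith : p ≠ 0)] using
      hderiv.abs.rpow_const (p := p) (Or.inr (by linarith))
  have hpot : Tendsto (fun s => V (u (ξ s))) atTop (𝓝 0) :=
    hVb ▸ (hV b).continuousAt.tendsto.comp (hlim.comp hξ)
  have hlimE : Tendsto (fun s => pEnergy p V u (ξ s)) atTop (𝓝 0) := by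
    simpa [pEnergy] using (hkin.const_mul ((p - 1) / p)).sub hpot
  simp only [pEnergy_eq_pEnergy hp hV hu hflux _ t] at hlimE
  exact tendsto_nhds_unique tendsto_const_nhds hlimE

end Energy

section Gronwall

variable {f f' K : ℝ → ℝ} {a : ℝ}

lemma eq_zero_of_abs_deriv_le_mul_abs_of_le (hf : ∀ t, HasDerivAt f (f' t) t) (hK : Continuous K)
    (hbound : ∀ t, |f' t| ≤ K t * |f t|) (ha : f a = 0) {b : ℝ} (hab : a ≤ b) : f b = 0 := by
  obtain ⟨C, hC⟩ := (isCompact_Icc (a := a) (b := b)).exists_bound_of_continuousOn hK.continuousOn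
  refine eq_zero_of_abs_deriv_le_mul_abs_self_of_eq_zero_right (K := C)
    (fun t _ => (hf t).continuousAt.continuousWithinAt) (fun t _ => (hf t).hasDerivWithinAt) ha
    (fun t ht => ?_) b ⟨hab, le_rfl⟩
  have hKC : K t ≤ C := (le_abs_self _).trans (hC t (Ico_subset_Icc_self ht))
  calc ‖f' t‖ = |f' t| := rfl
    _ ≤ K t * |f t| := hbound t
    _ ≤ C * ‖f t‖ := mul_le_mul_of_nonneg_right hKC (abs_nonneg _)

lemma eq_zero_of_abs_deriv_le_mul_abs (hf : ∀ t, HasDerivAt f (f' t) t) (hK : Continuous K)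
    (hbound : ∀ t, |f' t| ≤ K t * |f t|) (ha : f a = 0) (t : ℝ) : f t = 0 := by
  rcases le_total a t with hat | hta
  · exact eq_zero_of_abs_deriv_le_mul_abs_of_le hf hK hbound ha hat
  · have hrefl := eq_zero_of_abs_deriv_le_mul_abs_of_le (f := fun s => f (-s))
      (f' := fun s => -f' (-s)) (K := fun s => K (-s))
      (fun s => ((hf (-s)).comp s (hasDerivAt_neg' s)).congr_deriv (mul_neg_one _))
      (hK.comp continuous_neg)
      (fun s => by simpa using hbound (-s)) (by simpa using ha) (neg_le_neg hta)
    simpa using hrefl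

end Gronwall

section Uniqueness

variable {α β k : ℝ} {u : ℝ → ℝ}

lemma mem_Ioo_of_abs_deriv_eq (hu : Differentiable ℝ u)
    (hode : ∀ t, |deriv u t| = |(u t - α) * (u t - β)| / k) {t₀ : ℝ} (h₀ : u t₀ ∈ Ioo α β)
    (t : ℝ) : u t ∈ Ioo α β := by
  have hcu := hu.continuous
  have hne : ∀ c d, (∀ s, |deriv u s| = |u s - d| / k * |u s - c|) → u t₀ ≠ c → ∀ s, u s ≠ c := by
    intro c d hcd h0 s hs
    refine h0 (sub_eq_zero.mp (eq_zero_of_abs_deriv_le_mul_abs (f := fun s => u s - c)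
      (K := fun s => |u s - d| / k) (fun s => (hu s).hasDerivAt.sub_const c)
      (by fun_prop) (fun s => (hcd s).le) (sub_eq_zero.mpr hs) t₀))
  have hα := hne α β (fun s => by rw [hode, abs_mul]; ring) h₀.1.ne'
  have hβ := hne β α (fun s => by rw [hode, abs_mul]; ring) h₀.2.ne
  constructor
  · by_contra! h
    obtain ⟨s, hs⟩ := intermediate_value_univ t t₀ hcu ⟨h, h₀.1.le⟩
    exact hα s hs
  · by_contra! h
    obtain ⟨s, hs⟩ := intermediate_value_univ t₀ t hcu ⟨h₀.2.le, h⟩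
    exact hβ s hs

lemma deriv_pos_of_abs_deriv_eq (hu : Differentiable ℝ u) (hk : 0 < k)
    (hode : ∀ t, |deriv u t| = |(u t - α) * (u t - β)| / k) (hmem : ∀ t, u t ∈ Ioo α β)
    (hlim : Tendsto u atTop (𝓝 β)) (t : ℝ) : 0 < deriv u t := by
  have hne : ∀ t ∈ univ, deriv u t ≠ 0 := by
    intro t _ h0
    have hw : (u t - α) * (u t - β) ≠ 0 :=
      mul_ne_zero (sub_ne_zero.mpr (hmem t).1.ne') (sub_ne_zero.mpr (hmem t).2.ne)
    have h := hode t
    rw [h0, abs_zero, eq_comm, div_eq_zero_iff] at h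
    exact h.elim (fun h => hw (abs_eq_zero.mp h)) hk.ne'
  rcases hasDerivWithinAt_forall_lt_or_forall_gt_of_forall_ne convex_univ
    (fun t _ => (hu t).hasDerivAt.hasDerivWithinAt) hne with hneg | hpos
  · have hanti := strictAnti_of_deriv_neg fun t => hneg t trivial
    have hβ : β ≤ u 0 :=
      le_of_tendsto hlim (eventually_atTop.mpr ⟨0, fun s hs => hanti.antitone hs⟩)
    exact absurd hβ (hmem 0).2.not_ge
  · exact hpos t trivial

lemma eq_of_hasDerivAt_logistic {v : ℝ → ℝ}
    (hu : ∀ t, HasDerivAt u ((u t - α) * (β - u t) / k) t)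
    (hv : ∀ t, HasDerivAt v ((v t - α) * (β - v t) / k) t) {t₀ : ℝ} (h₀ : u t₀ = v t₀) :
    u = v := by
  have hcu : Continuous u := continuous_iff_continuousAt.mpr fun t => (hu t).continuousAt
  have hcv : Continuous v := continuous_iff_continuousAt.mpr fun t => (hv t).continuousAt
  funext t
  refine sub_eq_zero.mp (eq_zero_of_abs_deriv_le_mul_abs (f := fun s => u s - v s)
    (K := fun s => |α + β - u s - v s| / |k|) (fun s => (hu s).sub (hv s)) (by fun_prop)
    (fun s => le_of_eq ?_) (sub_eq_zero.mpr h₀) t)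
  rw [show (u s - α) * (β - u s) / k - (v s - α) * (β - v s) / k
      = (α + β - u s - v s) / k * (u s - v s) by ring, abs_mul, abs_div]

end Uniqueness

section DoubleWell

variable {p α β k : ℝ}

lemma doubleWell_eq_zero_right (hp : 1 < p) : doubleWell p α β β = 0 := by
  simp [doubleWell, zero_rpow (by linarith : p ≠ 0)]

lemma abs_deriv_eq_of_pEnergy_doubleWell_eq_zero {u : ℝ → ℝ} {t : ℝ} (hp : 1 < p) (hk : 0 < k)
    (hkp : k ^ p = p - 1) (h : pEnergy p (doubleWell p α β) u t = 0) :
    |deriv u t| = |(u t - α) * (u t - β)| / k := by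
  have hpow : |deriv u t| ^ p = (|(u t - α) * (u t - β)| / k) ^ p := by
    rw [div_rpow (abs_nonneg _) hk.le, hkp]
    simp only [pEnergy, doubleWell] at h
    field_simp [(by linarith : p ≠ 0), (by linarith : p - 1 ≠ 0)] at h ⊢
    linarith
  have hw : 0 ≤ |(u t - α) * (u t - β)| / k := by positivity
  exact rpow_left_injOn (by linarith : p ≠ 0) (abs_nonneg (deriv u t)) hw hpow

lemma isClassicalSolution_logisticProfile (hp : 1 < p) (hk : 0 < k) (hkp : k ^ p = p - 1)
    (hαβ : α < β) :
    IsClassicalSolution (fun t => t ^ (p - 2)) (doubleWell p α β) (logisticProfile α β k) := by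
  have hd_pos := deriv_logisticProfile_pos (α := α) (β := β) hαβ hk
  set q := logisticProfile α β k
  refine isClassicalSolution_rpow_iff.2
    ⟨fun t => (hasDerivAt_logisticProfile hk.ne' t).differentiableAt, fun t => ?_⟩
  have hflux : (fun s => pFlux p (deriv q s)) = fun s => deriv q s ^ (p - 1) :=
    funext fun s => pFlux_of_pos (hd_pos s)
  rw [hflux, (hasDerivAt_doubleWell hp α β (q t)).deriv]
  refine ((hasDerivAt_deriv_logisticProfile hk.ne' t).rpow_const
    (Or.inl (hd_pos t).ne')).congr_deriv ?_
  have hw : (q t - α) * (q t - β) = -(k * deriv q t) := by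
    rw [deriv_logisticProfile hk.ne']
    field_simp
    ring
  have hd_rpow : deriv q t ^ (p - 1) = deriv q t ^ (p - 1 - 1) * deriv q t := by
    rw [← rpow_add_one (hd_pos t).ne']
    ring_nf
  rw [hw, pFlux_neg, pFlux_of_pos (mul_pos hk (hd_pos t)), mul_rpow hk.le (hd_pos t).le,
    rpow_sub_one hk.ne', hkp, hd_rpow]
  field_simp
  ring

lemma isHeteroclinicAB_logisticProfile (hp : 1 < p) (hk : 0 < k) (hkp : k ^ p = p - 1)
    (hαβ : α < β) :
    IsHeteroclinicAB (fun t => t ^ (p - 2)) (doubleWell p α β) α β (logisticProfile α β k) :=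
  ⟨isClassicalSolution_logisticProfile hp hk hkp hαβ,
    fun t => (hasDerivAt_deriv_logisticProfile hk.ne' t).differentiableAt,
    continuous_iff_continuousAt.mpr fun t =>
      (hasDerivAt_deriv_logisticProfile hk.ne' t).continuousAt,
    logisticProfile_zero, tendsto_logisticProfile_atBot hαβ hk,
    tendsto_logisticProfile_atTop hαβ hk⟩

lemma eq_logisticProfile_of_isHeteroclinicAB {u : ℝ → ℝ} (hp : 1 < p) (hk : 0 < k)
    (hkp : k ^ p = p - 1) (hαβ : α < β)
    (hu : IsHeteroclinicAB (fun t => t ^ (p - 2)) (doubleWell p α β) α β u) :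
    u = logisticProfile α β k := by
  obtain ⟨hsol, -, -, hu0, -, hlim⟩ := hu
  obtain ⟨hdiff, hflux⟩ := isClassicalSolution_rpow_iff.1 hsol
  have hV : Differentiable ℝ (doubleWell p α β) := fun x =>
    (hasDerivAt_doubleWell hp α β x).differentiableAt
  have hode : ∀ t, |deriv u t| = |(u t - α) * (u t - β)| / k := fun t =>
    abs_deriv_eq_of_pEnergy_doubleWell_eq_zero hp hk hkp
      (pEnergy_eq_zero hp hV hdiff hflux hlim (doubleWell_eq_zero_right hp) t)
  have hmem := mem_Ioo_of_abs_deriv_eq hdiff hode (t₀ := 0)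
    (by rw [hu0]; constructor <;> linarith)
  have hlogistic : ∀ t, HasDerivAt u ((u t - α) * (β - u t) / k) t := by
    intro t
    have h := hode t
    rw [abs_of_pos (deriv_pos_of_abs_deriv_eq hdiff hk hode hmem hlim t), abs_mul,
      abs_of_pos (sub_pos.2 (hmem t).1), abs_of_neg (sub_neg.2 (hmem t).2), neg_sub] at h
    exact h ▸ (hdiff t).hasDerivAt
  exact eq_of_hasDerivAt_logistic hlogistic (hasDerivAt_logisticProfile hk.ne')
    (t₀ := 0) (by rw [hu0, logisticProfile_zero])

end DoubleWell

theorem statement8 (p α β : ℝ) (hp : 1 < p) (hαβ : α < β) :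
    IsHeteroclinicAB (fun t : ℝ => t ^ (p - 2))
      (fun t : ℝ => |(t - α) * (t - β)| ^ p / p) α β
      (fun t : ℝ => (α + β * Real.exp ((β - α) * t / (p - 1) ^ (1 / p))) /
        (1 + Real.exp ((β - α) * t / (p - 1) ^ (1 / p)))) ∧
    ∀ u : ℝ → ℝ,
      IsHeteroclinicAB (fun t : ℝ => t ^ (p - 2))
        (fun t : ℝ => |(t - α) * (t - β)| ^ p / p) α β u →
      u = fun t : ℝ => (α + β * Real.exp ((β - α) * t / (p - 1) ^ (1 / p))) /
        (1 + Real.exp ((β - α) * t / (p - 1) ^ (1 / p))) := by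
  have hk : 0 < (p - 1) ^ (1 / p) := rpow_pos_of_pos (by linarith) _
  have hkp : ((p - 1) ^ (1 / p)) ^ p = p - 1 := by
    rw [one_div, rpow_inv_rpow (by linarith) (by linarith)]
  rw [logisticProfile_eq]
  exact ⟨isHeteroclinicAB_logisticProfile hp hk hkp hαβ,
    fun u hu => eq_logisticProfile_of_isHeteroclinicAB hp hk hkp hαβ hu⟩
end

section
/- Let α > 0 and V ∈ C²(ℝ,ℝ) with V ≥ 0, V(α) = V(−α) = 0, V(t) > 0 for t ∈ (−α,α), V''(−α) > 0, V''(α) > 0, and suppose there exist d₁,d₂,d₃,d₄ > 0 with −d₁ t|t−α| ≤ V'(t) ≤ −d₂ t|t−α| for t ∈ [0,α] and −d₃ t|t+α| ≤ V'(t) ≤ −d₄ t|t+α| for t ∈ [−α,0]. If the problem −(u'/√(1+(u')²))' + V'(u) = 0 on ℝ, u(0) = 0, u(t) → ±α as t → ±∞, has a twice differentiable solution with continuous derivative, then this solution is unique: any two such solutions coincide. -/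
/-!
Along a solution `q` the energy `(√(1 + q'²))⁻¹ + V(q)` is conserved, and its value at `+∞`
is `1`. Since `V ≥ 0` vanishes at `±α`, the points `(±α, 0)` are equilibria of the
first-order system satisfied by `(q, q'/√(1 + q'²))`, so by uniqueness for that system `q`
never reaches `±α`. Hence
`V(q) > 0`, which forces `q' ≠ 0` and then `q' > 0`, and the energy identity turns into the
autonomous equation `q' = √((1 - V(q))⁻² - 1)`, whose right-hand side is `C¹` along `q`.
Uniqueness for this scalar equation with `q(0) = 0` gives the theorem.
-/

open Real Filter Set MeasureTheory

def IsMCHeteroclinic (V : ℝ → ℝ) (α : ℝ) (q : ℝ → ℝ) : Prop :=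
  Differentiable ℝ q ∧
  (∀ t : ℝ, HasDerivAt (fun s => deriv q s / Real.sqrt (1 + (deriv q s) ^ 2))
    (deriv V (q t)) t) ∧
  Differentiable ℝ (deriv q) ∧ Continuous (deriv q) ∧ q 0 = 0 ∧
  Tendsto q atTop (nhds α) ∧ Tendsto q atBot (nhds (-α))

open Topology

theorem ODE_solution_unique_of_contDiffAt {E : Type*} [NormedAddCommGroup E] [NormedSpace ℝ E]
    {v : E → E} {f g : ℝ → E} (hf : ∀ t, HasDerivAt f (v (f t)) t)
    (hg : ∀ t, HasDerivAt g (v (g t)) t) (hv : ∀ t, ContDiffAt ℝ 1 v (f t)) {t₀ : ℝ}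
    (h₀ : f t₀ = g t₀) : f = g := by
  have hclopen : IsClopen {t | f t = g t} := by
    refine ⟨isClosed_eq (continuous_iff_continuousAt.2 fun t => (hf t).continuousAt)
      (continuous_iff_continuousAt.2 fun t => (hg t).continuousAt),
      isOpen_iff_mem_nhds.2 fun t (ht : f t = g t) => ?_⟩
    obtain ⟨K, s, hs, hlip⟩ := (hv t).exists_lipschitzOnWith
    have hfs : ∀ᶠ τ in 𝓝 t, f τ ∈ s := (hf t).continuousAt.eventually_mem hs
    have hgs : ∀ᶠ τ in 𝓝 t, g τ ∈ s := (hg t).continuousAt.eventually_mem (ht ▸ hs)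
    exact ODE_solution_unique_of_eventually (v := fun _ => v) (s := fun _ => s)
      (.of_forall fun _ => hlip) (hfs.mono fun τ h => ⟨hf τ, h⟩)
      (hgs.mono fun τ h => ⟨hg τ, h⟩) ht
  funext t
  exact eq_univ_iff_forall.1 (hclopen.eq_univ ⟨t₀, h₀⟩) t

theorem Continuous.lt_of_forall_ne {X α : Type*} [TopologicalSpace X] [PreconnectedSpace X]
    [LinearOrder α] [TopologicalSpace α] [OrderClosedTopology α] {f : X → α}
    (hf : Continuous f) {c : α} (hne : ∀ x, f x ≠ c) {x₀ : X} (h₀ : f x₀ < c) (x : X) :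
    f x < c := by
  by_contra! h
  obtain ⟨y, hy⟩ := intermediate_value_univ x₀ x hf ⟨h₀.le, h⟩
  exact hne y hy

theorem exists_seq_tendsto_deriv_zero {f : ℝ → ℝ} {a : ℝ} (hf : Differentiable ℝ f)
    (hlim : Tendsto f atTop (𝓝 a)) :
    ∃ c : ℕ → ℝ, Tendsto c atTop atTop ∧ Tendsto (fun n => deriv f (c n)) atTop (𝓝 0) := by
  have hslope : ∀ n : ℕ, ∃ c ∈ Ioo (n : ℝ) (n + 1), deriv f c = (f (n + 1) - f n) / (n + 1 - n) :=
    fun n => exists_deriv_eq_slope f (by linarith) hf.continuous.continuousOn hf.differentiableOn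
  choose c hc hc' using hslope
  refine ⟨c, tendsto_atTop_mono (fun n => (hc n).1.le) tendsto_natCast_atTop_atTop, ?_⟩
  have hdiff := (hlim.comp (tendsto_atTop_add_const_right _ 1 tendsto_natCast_atTop_atTop)).sub
    (hlim.comp tendsto_natCast_atTop_atTop)
  rw [sub_self] at hdiff
  refine hdiff.congr fun n => ?_
  simp [hc' n]

theorem one_sub_sq_div_sqrt_one_add_sq (x : ℝ) : 1 - (x / √(1 + x ^ 2)) ^ 2 = (1 + x ^ 2)⁻¹ := by
  have h : (0 : ℝ) < 1 + x ^ 2 := by positivity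
  rw [div_pow, sq_sqrt h.le]
  field_simp
  ring

theorem sqrt_one_sub_sq_div_sqrt_one_add_sq (x : ℝ) :
    √(1 - (x / √(1 + x ^ 2)) ^ 2) = (√(1 + x ^ 2))⁻¹ := by
  rw [one_sub_sq_div_sqrt_one_add_sq, sqrt_inv]

theorem div_sqrt_one_sub_sq_div_sqrt_one_add_sq (x : ℝ) :
    x / √(1 + x ^ 2) / √(1 - (x / √(1 + x ^ 2)) ^ 2) = x := by
  have h : √(1 + x ^ 2) ≠ 0 := by positivity
  rw [sqrt_one_sub_sq_div_sqrt_one_add_sq]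
  field_simp

theorem inv_sqrt_one_add_sq_eq_one_iff {x : ℝ} : (√(1 + x ^ 2))⁻¹ = 1 ↔ x = 0 := by
  rw [inv_eq_one, sqrt_eq_one]
  simp

noncomputable def mcEnergy (V q : ℝ → ℝ) (t : ℝ) : ℝ := (√(1 + deriv q t ^ 2))⁻¹ + V (q t)

noncomputable def mcSpeed (V : ℝ → ℝ) (u : ℝ) : ℝ := √((1 - V u)⁻¹ ^ 2 - 1)

section
variable {V q : ℝ → ℝ}

theorem mcEnergy_eq (hV : Differentiable ℝ V) (hq : Differentiable ℝ q)
    (hode : ∀ t, HasDerivAt (fun s => deriv q s / √(1 + deriv q s ^ 2)) (deriv V (q t)) t)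
    (t s : ℝ) : mcEnergy V q t = mcEnergy V q s := by
  set w := fun s => deriv q s / √(1 + deriv q s ^ 2)
  have hE : mcEnergy V q = fun t => √(1 - w t ^ 2) + V (q t) := by
    funext t
    simp only [mcEnergy, w, sqrt_one_sub_sq_div_sqrt_one_add_sq]
  have hderiv : ∀ t, HasDerivAt (mcEnergy V q) 0 t := by
    intro t
    have hw : 0 < 1 - w t ^ 2 := by
      simp only [w, one_sub_sq_div_sqrt_one_add_sq]
      positivity
    have hw' : √(1 - w t ^ 2) ≠ 0 := (sqrt_pos.2 hw).ne'
    have hq' : deriv q t = w t / √(1 - w t ^ 2) :=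
      (div_sqrt_one_sub_sq_div_sqrt_one_add_sq _).symm
    rw [hE]
    refine ((((hasDerivAt_const t 1).sub ((hode t).pow 2)).sqrt hw.ne').add
      ((hV (q t)).hasDerivAt.comp t (hq t).hasDerivAt)).congr_deriv ?_
    simp only [Pi.sub_apply, Pi.pow_apply, hq']
    field_simp
    ring
  exact is_const_of_deriv_eq_zero (fun t => (hderiv t).differentiableAt)
    (fun t => (hderiv t).deriv) t s

theorem mcEnergy_eq_one {α : ℝ} (hV : Differentiable ℝ V) (hq : Differentiable ℝ q)
    (hode : ∀ t, HasDerivAt (fun s => deriv q s / √(1 + deriv q s ^ 2)) (deriv V (q t)) t)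
    (hVα : V α = 0) (htop : Tendsto q atTop (𝓝 α)) (t : ℝ) : mcEnergy V q t = 1 := by
  obtain ⟨c, hc, hc'⟩ := exists_seq_tendsto_deriv_zero hq htop
  have hcont : Continuous fun x : ℝ => (√(1 + x ^ 2))⁻¹ :=
    (continuous_const.add (continuous_pow 2)).sqrt.inv₀ fun x =>
      sqrt_ne_zero'.2 (by positivity : (0 : ℝ) < 1 + x ^ 2)
  have hlim : Tendsto (fun n => mcEnergy V q (c n)) atTop (𝓝 ((√(1 + 0 ^ 2))⁻¹ + V α)) :=
    ((hcont.tendsto 0).comp hc').add ((hV.continuous.tendsto α).comp (htop.comp hc))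
  simpa [hVα, mcEnergy_eq hV hq hode _ t] using hlim

theorem ne_of_mcEnergy_eq_one {β t₀ : ℝ} (hV : ContDiff ℝ 1 (deriv V)) (hq : Differentiable ℝ q)
    (hode : ∀ t, HasDerivAt (fun s => deriv q s / √(1 + deriv q s ^ 2)) (deriv V (q t)) t)
    (hE : ∀ t, mcEnergy V q t = 1) (hVβ : V β = 0) (hV'β : deriv V β = 0) (h₀ : q t₀ ≠ β)
    (t : ℝ) : q t ≠ β := by
  intro ht
  set w := fun s => deriv q s / √(1 + deriv q s ^ 2)
  let v : ℝ × ℝ → ℝ × ℝ := fun z => (z.2 / √(1 - z.2 ^ 2), deriv V z.1)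
  have hsys : ∀ s, HasDerivAt (fun s => (q s, w s)) (v (q s, w s)) s := fun s => by
    simpa only [v, w, div_sqrt_one_sub_sq_div_sqrt_one_add_sq] using
      (hq s).hasDerivAt.prodMk (hode s)
  have hv : ∀ s, ContDiffAt ℝ 1 v (q s, w s) := fun s => by
    have hw : 0 < 1 - w s ^ 2 := by
      simp only [w, one_sub_sq_div_sqrt_one_add_sq]
      positivity
    exact (contDiffAt_snd.div ((contDiffAt_const.sub (contDiffAt_snd.pow 2)).sqrt hw.ne')
      (sqrt_pos.2 hw).ne').prodMk (hV.contDiffAt.comp _ contDiffAt_fst)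
  have hequil : ∀ s : ℝ, HasDerivAt (fun _ => (β, (0 : ℝ))) (v (β, 0)) s := fun s =>
    (hasDerivAt_const s (β, (0 : ℝ))).congr_deriv (by simp [v, hV'β, Prod.zero_eq_mk])
  have hq't : deriv q t = 0 :=
    inv_sqrt_one_add_sq_eq_one_iff.1 (by simpa [mcEnergy, ht, hVβ] using hE t)
  have hconst :=
    ODE_solution_unique_of_contDiffAt hsys hequil hv (t₀ := t) (by simp [w, ht, hq't])
  exact h₀ (congrArg Prod.fst (congrFun hconst t₀))

theorem deriv_eq_mcSpeed {t : ℝ} (hE : mcEnergy V q t = 1) (hpos : 0 < deriv q t) :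
    deriv q t = mcSpeed V (q t) := by
  have hVq : 1 - V (q t) = (√(1 + deriv q t ^ 2))⁻¹ := by
    rw [mcEnergy] at hE
    linarith
  rw [mcSpeed, hVq, inv_inv, sq_sqrt (by positivity), add_sub_cancel_left, sqrt_sq hpos.le]

theorem contDiffAt_mcSpeed {u : ℝ} (hV : ContDiffAt ℝ 1 V u) (h₀ : 0 < V u) (h₁ : V u < 1) :
    ContDiffAt ℝ 1 (mcSpeed V) u := by
  have hlt : 1 < (1 - V u)⁻¹ := one_lt_inv₀ (by linarith) |>.2 (by linarith)
  have hne : (1 - V u)⁻¹ ^ 2 - 1 ≠ 0 := by nlinarith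
  exact ((((contDiffAt_const.sub hV).inv (by linarith)).pow 2).sub contDiffAt_const).sqrt hne

theorem deriv_pos_of_tendsto {f : ℝ → ℝ} {a : ℝ} (hf : Differentiable ℝ f)
    (hf' : Continuous (deriv f)) (hne : ∀ t, deriv f t ≠ 0) (ha : f 0 < a)
    (hlim : Tendsto f atTop (𝓝 a)) (t : ℝ) : 0 < deriv f t := by
  obtain ⟨T, hT, hT₀⟩ := ((hlim.eventually (lt_mem_nhds ha)).and (eventually_gt_atTop 0)).exists
  obtain ⟨c, -, hc⟩ := exists_deriv_eq_slope f hT₀ hf.continuous.continuousOn hf.differentiableOn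
  have hneg : -deriv f c < 0 := by
    rw [hc, neg_lt_zero]
    exact div_pos (by linarith) (by linarith)
  have := hf'.neg.lt_of_forall_ne (fun s hs => hne s (neg_eq_zero.1 hs)) hneg t
  simpa using this

variable {α : ℝ}

theorem IsMCHeteroclinic.mem_Ioo (hq : IsMCHeteroclinic V α q) (hα : 0 < α)
    (hV : ContDiff ℝ 2 V) (hnn : ∀ t, 0 ≤ V t) (hVα : V α = 0) (hVmα : V (-α) = 0)
    (hE : ∀ t, mcEnergy V q t = 1) (t : ℝ) : q t ∈ Ioo (-α) α := by
  obtain ⟨hqd, hode, -, -, hq0, -, -⟩ := hq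
  have hcrit : ∀ β, V β = 0 → deriv V β = 0 := fun β hβ =>
    IsLocalMin.deriv_eq_zero (.of_forall fun s => hβ ▸ hnn s)
  have hne : ∀ β, V β = 0 → β ≠ 0 → ∀ t, q t ≠ β := fun β hβ hβ₀ =>
    ne_of_mcEnergy_eq_one (hV.deriv' (n := 1)) hqd hode hE hβ (hcrit β hβ) (t₀ := 0)
      (by rw [hq0]; exact hβ₀.symm)
  have hlow : -q t < α := hqd.continuous.neg.lt_of_forall_ne
    (fun s hs => hne (-α) hVmα (by linarith) s (neg_eq_iff_eq_neg.1 hs)) (x₀ := 0)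
    (by simpa [hq0]) t
  have hhigh : q t < α :=
    hqd.continuous.lt_of_forall_ne (hne α hVα hα.ne') (x₀ := 0) (by rwa [hq0]) t
  exact ⟨by linarith, hhigh⟩

theorem IsMCHeteroclinic.hasDerivAt_mcSpeed (hq : IsMCHeteroclinic V α q) (hα : 0 < α)
    (hV : ContDiff ℝ 2 V) (hnn : ∀ t, 0 ≤ V t) (hVα : V α = 0) (hVmα : V (-α) = 0)
    (hVpos : ∀ t, -α < t → t < α → 0 < V t) (t : ℝ) :
    HasDerivAt q (mcSpeed V (q t)) t ∧ ContDiffAt ℝ 1 (mcSpeed V) (q t) := by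
  obtain ⟨hqd, hode, -, hq'c, hq0, htop, -⟩ := id hq
  have hE := mcEnergy_eq_one (hV.differentiable two_ne_zero) hqd hode hVα htop
  have hrange := hq.mem_Ioo hα hV hnn hVα hVmα hE
  have hVq : ∀ s, 0 < V (q s) := fun s => hVpos _ (hrange s).1 (hrange s).2
  have hne : ∀ s, deriv q s ≠ 0 := fun s h0 => by
    simpa [mcEnergy, h0, (hVq s).ne'] using hE s
  have hpos := deriv_pos_of_tendsto hqd hq'c hne (by rwa [hq0]) htop t
  refine ⟨deriv_eq_mcSpeed (hE t) hpos ▸ (hqd t).hasDerivAt,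
    contDiffAt_mcSpeed (hV.of_le one_le_two).contDiffAt (hVq t) ?_⟩
  have := hE t
  rw [mcEnergy] at this
  linarith [inv_pos.2 (sqrt_pos.2 (by positivity : (0 : ℝ) < 1 + deriv q t ^ 2))]

end

theorem statement10_general (V : ℝ → ℝ) (α : ℝ) (hα : 0 < α)
    (hC2 : ContDiff ℝ 2 V) (hnn : ∀ t, 0 ≤ V t)
    (hzero : V α = 0 ∧ V (-α) = 0 ∧ ∀ t, -α < t → t < α → 0 < V t) :
    ∀ q₁ q₂ : ℝ → ℝ, IsMCHeteroclinic V α q₁ → IsMCHeteroclinic V α q₂ → q₁ = q₂ := by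
  obtain ⟨hVα, hVmα, hVpos⟩ := hzero
  intro q₁ q₂ hq₁ hq₂
  have h₁ := hq₁.hasDerivAt_mcSpeed hα hC2 hnn hVα hVmα hVpos
  have h₂ := hq₂.hasDerivAt_mcSpeed hα hC2 hnn hVα hVmα hVpos
  exact ODE_solution_unique_of_contDiffAt (fun t => (h₁ t).1) (fun t => (h₂ t).1)
    (fun t => (h₁ t).2) (t₀ := 0) (hq₁.2.2.2.2.1.trans hq₂.2.2.2.2.1.symm)

theorem statement10 (V : ℝ → ℝ) (α : ℝ) (hα : 0 < α)
    (hC2 : ContDiff ℝ 2 V) (hnn : ∀ t, 0 ≤ V t)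
    (hzero : V α = 0 ∧ V (-α) = 0 ∧ ∀ t, -α < t → t < α → 0 < V t)
    (hconv : 0 < deriv (deriv V) (-α) ∧ 0 < deriv (deriv V) α)
    (hV7 : ∃ d₁ d₂ d₃ d₄ : ℝ, 0 < d₁ ∧ 0 < d₂ ∧ 0 < d₃ ∧ 0 < d₄ ∧
      (∀ t, 0 ≤ t → t ≤ α →
        -(d₁ * t * |t - α|) ≤ deriv V t ∧ deriv V t ≤ -(d₂ * t * |t - α|)) ∧
      (∀ t, -α ≤ t → t ≤ 0 →
        -(d₃ * t * |t + α|) ≤ deriv V t ∧ deriv V t ≤ -(d₄ * t * |t + α|))) :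
    ∀ q₁ q₂ : ℝ → ℝ, IsMCHeteroclinic V α q₁ → IsMCHeteroclinic V α q₂ → q₁ = q₂ :=
  statement10_general V α hα hC2 hnn hzero
end

section
/- Assume (φ1)–(φ3) and (V1)–(V5), and let q be the unique heteroclinic solution of problem (P). Then: (i) −α < q(s) < 0 < q(t) < α for all s < 0 < t; (ii) q'(t) > 0 for every t ∈ ℝ, so q is strictly increasing on ℝ; and (iii) q' is non-increasing on [0,∞), so q is concave on [0,∞). -/
/-!
Write `g(s) = φ(|s|) s = Φ'(s)` (`flux`). Along a heteroclinic `q` the quantity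
`q' g(q') - Φ(q') - V(q)` has zero derivative and tends to `0` at `+∞`, so
`q' g(q') - Φ(q') = V(q)`. By (φ2) the left side dominates `(l - 1) Φ(q')`; near `±α`,
(φ3) and (V3) then give `|q'| ≤ K |q ∓ α|`, and Grönwall's inequality shows that `q` never
reaches `±α`. Hence `V(q) > 0`, so `q'` never vanishes, and since `q` rises from `0` towards `α`,
`q' > 0`. Finally `g(q')` has derivative `V'(q)`, which (V4) makes nonpositive while `0 ≤ q < α`;
as `g` is increasing, `q'` decreases on `[0, ∞)`.
-/

open Real Filter Set MeasureTheory

open Topology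

/-- The expression of `IsClassicalSolution`, so that its hypothesis is about `flux φ ∘ deriv q`. -/
noncomputable def flux (φ : ℝ → ℝ) (s : ℝ) : ℝ := if s = 0 then 0 else φ |s| * s

noncomputable def kineticEnergy (φ : ℝ → ℝ) (s : ℝ) : ℝ := s * flux φ s - Phi φ s

lemma integral_mul_rpow_sub_one {c r u : ℝ} (hr : 0 < r) :
    ∫ t in (0:ℝ)..u, c * t ^ (r - 1) = c / r * u ^ r := by
  rw [intervalIntegral.integral_const_mul, integral_rpow (Or.inl (by linarith)), sub_add_cancel,
    zero_rpow hr.ne']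
  ring

section Flux

variable {φ : ℝ → ℝ}

lemma flux_zero : flux φ 0 = 0 := if_pos rfl

lemma flux_of_nonneg {s : ℝ} (hs : 0 ≤ s) : flux φ s = φ s * s := by
  rcases hs.eq_or_lt with rfl | hs
  · simp [flux]
  · simp [flux, hs.ne', abs_of_pos hs]

lemma flux_neg (s : ℝ) : flux φ (-s) = -flux φ s := by
  by_cases hs : s = 0 <;> simp [flux, hs]

lemma abs_flux (s : ℝ) : |flux φ s| = |(φ |s| * |s|)| := by
  by_cases hs : s = 0 <;> simp [flux, hs, abs_mul]

lemma tendsto_mul_nhdsGT_zero_of_le_rpow (hφpos : ∀ t > 0, 0 < φ t) {c r δ₀ : ℝ}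
    (hr : 1 < r) (hδ₀ : 0 < δ₀) (hup : ∀ t, 0 < t → t ≤ δ₀ → φ t * t ≤ c * t ^ (r - 1)) :
    Tendsto (fun t => φ t * t) (𝓝[>] 0) (𝓝 0) := by
  have hrpow : Tendsto (fun t : ℝ => c * t ^ (r - 1)) (𝓝[>] 0) (𝓝 0) := by
    have h := ((continuousAt_const.mul (continuousAt_rpow_const 0 (r - 1)
      (Or.inr (by linarith)))).tendsto (f := fun t : ℝ => c * t ^ (r - 1)))
    rw [zero_rpow (by linarith), mul_zero] at h
    exact h.mono_left nhdsWithin_le_nhds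
  refine squeeze_zero' ?_ ?_ hrpow
  · filter_upwards [self_mem_nhdsWithin] with t (ht : 0 < t)
    exact (mul_pos (hφpos t ht) ht).le
  · filter_upwards [Ioc_mem_nhdsGT hδ₀] with t ht
    exact hup t ht.1 ht.2

lemma continuous_flux (hφ : ContinuousOn φ (Ioi 0))
    (h0 : Tendsto (fun t => φ t * t) (𝓝[>] 0) (𝓝 0)) : Continuous (flux φ) := by
  refine continuous_iff_continuousAt.2 fun s => ?_
  by_cases hs : s = 0
  · subst hs
    rw [continuousAt_iff_punctured_nhds, flux_zero, tendsto_zero_iff_abs_tendsto_zero]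
    have h := (h0.comp tendsto_abs_nhdsNE_zero).abs
    rw [abs_zero] at h
    exact h.congr fun u => (abs_flux u).symm
  · have hcont : ContinuousAt (fun u => φ |u| * u) s :=
      ((hφ.continuousAt (Ioi_mem_nhds (abs_pos.2 hs))).comp continuous_abs.continuousAt).mul
        continuousAt_id
    refine hcont.congr ?_
    filter_upwards [isOpen_ne.mem_nhds hs] with u hu
    rw [flux, if_neg hu]

lemma Phi_abs (s : ℝ) : Phi φ |s| = Phi φ s := by
  simp [Phi]

lemma Phi_neg (s : ℝ) : Phi φ (-s) = Phi φ s := by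
  simp [Phi]

lemma Phi_zero : Phi φ 0 = 0 := by
  simp [Phi]

lemma Phi_eq_integral_flux (s : ℝ) : Phi φ s = ∫ u in (0:ℝ)..s, flux φ u := by
  have habs : Phi φ s = ∫ u in (0:ℝ)..|s|, flux φ u := by
    refine intervalIntegral.integral_congr fun u hu => ?_
    rw [uIcc_of_le (abs_nonneg s)] at hu
    rw [flux_of_nonneg hu.1, mul_comm]
  rw [habs]
  rcases le_total 0 s with hs | hs
  · rw [abs_of_nonneg hs]
  · have hodd : ∫ u in (0:ℝ)..s, flux φ u = -∫ u in (0:ℝ)..s, flux φ (-u) := by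
      simp [flux_neg]
    rw [hodd, intervalIntegral.integral_comp_neg, neg_zero, intervalIntegral.integral_symm,
      abs_of_nonpos hs]

lemma hasDerivAt_Phi (hflux : Continuous (flux φ)) (s : ℝ) :
    HasDerivAt (Phi φ) (flux φ s) s := by
  rw [show Phi φ = fun s => ∫ u in (0:ℝ)..s, flux φ u from funext Phi_eq_integral_flux]
  exact (hflux.integral_hasStrictDerivAt 0 s).hasDerivAt

lemma Phi_pos (hflux : Continuous (flux φ)) (hφpos : ∀ t > 0, 0 < φ t) {s : ℝ} (hs : s ≠ 0) :
    0 < Phi φ s := by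
  rw [← Phi_abs, Phi_eq_integral_flux]
  refine intervalIntegral.intervalIntegral_pos_of_pos_on (hflux.intervalIntegrable _ _)
    (fun u hu => ?_) (abs_pos.2 hs)
  rw [flux_of_nonneg hu.1.le]
  exact mul_pos (hφpos u hu.1) hu.1

lemma Phi_le_rpow (hflux : Continuous (flux φ)) {c r δ₀ : ℝ} (hr : 0 < r)
    (hup : ∀ t, 0 < t → t ≤ δ₀ → φ t * t ≤ c * t ^ (r - 1)) {u : ℝ} (hu : 0 ≤ u) (huδ : u ≤ δ₀) :
    Phi φ u ≤ c / r * u ^ r := by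
  rw [Phi_eq_integral_flux, ← integral_mul_rpow_sub_one hr]
  refine intervalIntegral.integral_mono_on_of_le_Ioo hu (hflux.intervalIntegrable _ _)
    ((intervalIntegral.intervalIntegrable_rpow' (by linarith)).const_mul c) fun t ht => ?_
  rw [flux_of_nonneg ht.1.le]
  exact hup t ht.1 (ht.2.le.trans huδ)

lemma rpow_le_Phi (hflux : Continuous (flux φ)) {c r δ₀ : ℝ} (hr : 0 < r)
    (hlow : ∀ t, 0 < t → t ≤ δ₀ → c * t ^ (r - 1) ≤ φ t * t) {u : ℝ} (hu : 0 ≤ u) (huδ : u ≤ δ₀) :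
    c / r * u ^ r ≤ Phi φ u := by
  rw [Phi_eq_integral_flux, ← integral_mul_rpow_sub_one hr]
  refine intervalIntegral.integral_mono_on_of_le_Ioo hu
    ((intervalIntegral.intervalIntegrable_rpow' (by linarith)).const_mul c)
    (hflux.intervalIntegrable _ _) fun t ht => ?_
  rw [flux_of_nonneg ht.1.le]
  exact hlow t ht.1 (ht.2.le.trans huδ)

lemma kineticEnergy_zero : kineticEnergy φ 0 = 0 := by
  simp [kineticEnergy, Phi_zero]

lemma kineticEnergy_neg (s : ℝ) : kineticEnergy φ (-s) = kineticEnergy φ s := by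
  simp [kineticEnergy, flux_neg, Phi_neg]

lemma continuous_Phi (hflux : Continuous (flux φ)) : Continuous (Phi φ) :=
  continuous_iff_continuousAt.2 fun s => (hasDerivAt_Phi hflux s).continuousAt

lemma continuous_kineticEnergy (hflux : Continuous (flux φ)) : Continuous (kineticEnergy φ) :=
  (continuous_id.mul hflux).sub (continuous_Phi hflux)

lemma hasDerivAt_flux_of_pos {x : ℝ} (hx : 0 < x) (hφx : DifferentiableAt ℝ φ x) :
    HasDerivAt (flux φ) (deriv (fun s => φ s * s) x) x := by
  refine (hφx.mul differentiableAt_id).hasDerivAt.congr_of_eventuallyEq ?_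
  filter_upwards [Ioi_mem_nhds hx] with s hs
  exact flux_of_nonneg (le_of_lt hs)

lemma strictMonoOn_flux (hflux : Continuous (flux φ))
    (hφ1 : ∀ t > 0, 0 < deriv (fun s => φ s * s) t) : StrictMonoOn (flux φ) (Ici 0) := by
  refine strictMonoOn_of_deriv_pos (convex_Ici 0) hflux.continuousOn fun x hx => ?_
  rw [interior_Ici] at hx
  have hloc : flux φ =ᶠ[𝓝 x] fun s => φ s * s := by
    filter_upwards [Ioi_mem_nhds hx] with s hs
    exact flux_of_nonneg (le_of_lt hs)
  rw [hloc.deriv_eq]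
  exact hφ1 x hx

lemma mul_Phi_le_kineticEnergy (hflux : Continuous (flux φ))
    (hφd : ∀ t > 0, DifferentiableAt ℝ φ t) (hφpos : ∀ t > 0, 0 < φ t) {l : ℝ}
    (hφ2 : ∀ t > 0, l - 1 ≤ deriv (fun s => φ s * s) t / φ t) (s : ℝ) :
    (l - 1) * Phi φ s ≤ kineticEnergy φ s := by
  wlog hs : 0 ≤ s generalizing s
  · simpa [kineticEnergy_neg, Phi_neg] using this (-s) (by linarith)
  let F : ℝ → ℝ := fun t => t * flux φ t - l * Phi φ t
  have hF : MonotoneOn F (Ici 0) := by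
    refine monotoneOn_of_hasDerivWithinAt_nonneg
      (f' := fun t => t * deriv (fun s => φ s * s) t - (l - 1) * flux φ t) (convex_Ici 0)
      ((continuous_id.mul hflux).sub (continuous_const.mul (continuous_Phi hflux))).continuousOn
      (fun x hx => ?_) fun x hx => ?_
    all_goals rw [interior_Ici] at hx
    · have h := ((hasDerivAt_id' x).mul (hasDerivAt_flux_of_pos hx (hφd x hx))).sub
        ((hasDerivAt_Phi hflux x).const_mul l)
      exact h.hasDerivWithinAt.congr_deriv (by ring)
    · have hd := (le_div_iff₀ (hφpos x hx)).1 (hφ2 x hx)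
      rw [flux_of_nonneg hx.le]
      nlinarith [mul_le_mul_of_nonneg_left hd (le_of_lt hx)]
  have := hF self_mem_Ici hs hs
  simp only [F, flux_zero, Phi_zero, mul_zero, sub_zero] at this
  simp only [kineticEnergy]
  linarith

lemma kineticEnergy_pos (hflux : Continuous (flux φ)) (hφd : ∀ t > 0, DifferentiableAt ℝ φ t)
    (hφpos : ∀ t > 0, 0 < φ t) {l : ℝ} (hl : 1 < l)
    (hφ2 : ∀ t > 0, l - 1 ≤ deriv (fun s => φ s * s) t / φ t) {s : ℝ} (hs : s ≠ 0) :
    0 < kineticEnergy φ s :=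
  (mul_pos (sub_pos.2 hl) (Phi_pos hflux hφpos hs)).trans_le
    (mul_Phi_le_kineticEnergy hflux hφd hφpos hφ2 s)

lemma rpow_le_kineticEnergy (hflux : Continuous (flux φ)) (hφd : ∀ t > 0, DifferentiableAt ℝ φ t)
    (hφpos : ∀ t > 0, 0 < φ t) {l : ℝ} (hl : 1 ≤ l)
    (hφ2 : ∀ t > 0, l - 1 ≤ deriv (fun s => φ s * s) t / φ t) {c r δ₀ : ℝ} (hr : 0 < r)
    (hlow : ∀ t, 0 < t → t ≤ δ₀ → c * t ^ (r - 1) ≤ φ t * t) {s : ℝ} (hs : |s| ≤ δ₀) :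
    (l - 1) * (c / r) * |s| ^ r ≤ kineticEnergy φ s := by
  calc (l - 1) * (c / r) * |s| ^ r = (l - 1) * (c / r * |s| ^ r) := by ring
    _ ≤ (l - 1) * Phi φ |s| :=
      mul_le_mul_of_nonneg_left (rpow_le_Phi hflux hr hlow (abs_nonneg s) hs) (sub_nonneg.2 hl)
    _ ≤ kineticEnergy φ s := Phi_abs s ▸ mul_Phi_le_kineticEnergy hflux hφd hφpos hφ2 s

end Flux

lemma le_rpow_inv_mul_of_mul_rpow_le {x w c C r : ℝ} (hx : 0 ≤ x) (hw : 0 ≤ w) (hr : 0 < r)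
    (hc : 0 < c) (hC : 0 ≤ C) (h : c * x ^ r ≤ C * w ^ r) : x ≤ (C / c) ^ r⁻¹ * w := by
  have h' : x ^ r ≤ C / c * w ^ r := by
    rw [div_mul_eq_mul_div, le_div_iff₀ hc]
    linarith
  calc x = (x ^ r) ^ r⁻¹ := (rpow_rpow_inv hx hr.ne').symm
    _ ≤ (C / c * w ^ r) ^ r⁻¹ := rpow_le_rpow (rpow_nonneg hx _) h' (inv_nonneg.2 hr.le)
    _ = (C / c) ^ r⁻¹ * w := by
      rw [mul_rpow (div_nonneg hC hc.le) (rpow_nonneg hw _), rpow_rpow_inv hw hr.ne']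

lemma pos_on_Iic_of_local_gronwall {f f' : ℝ → ℝ} (hf : ∀ t, HasDerivAt f (f' t) t)
    (hloc : ∀ t, f t = 0 → ∃ K, ∀ᶠ s in 𝓝 t, 0 ≤ f s → |f' s| ≤ K * f s)
    {b : ℝ} (hb : 0 < f b) : ∀ t ≤ b, 0 < f t := by
  have hfc : Continuous f := continuous_iff_continuousAt.2 fun t => (hf t).continuousAt
  by_contra! ⟨x, hxb, hx⟩
  -- `t₂` is the last point of `[x, b]` where `f ≤ 0`; Grönwall forward from `t₂` contradicts
  -- `f > 0` on `(t₂, b]`.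
  set S := Icc x b ∩ {t | f t ≤ 0}
  have hSb : BddAbove S := ⟨b, fun t ht => ht.1.2⟩
  have ht₂ : sSup S ∈ S :=
    (isClosed_Icc.inter (isClosed_le hfc continuous_const)).csSup_mem ⟨x, ⟨le_rfl, hxb⟩, hx⟩ hSb
  set t₂ := sSup S
  have ht₂b : t₂ < b := ht₂.1.2.lt_of_ne fun h => by
    have : f t₂ ≤ 0 := ht₂.2
    rw [h] at this
    linarith
  have hpos : ∀ t ∈ Ioc t₂ b, 0 < f t := fun t ht => by
    by_contra! h
    exact (le_csSup hSb ⟨⟨ht₂.1.1.trans ht.1.le, ht.2⟩, h⟩).not_gt ht.1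
  have hzero : f t₂ = 0 := by
    refine le_antisymm ht₂.2 (ge_of_tendsto (hfc.continuousAt.tendsto.mono_left
      (nhdsWithin_le_nhds (s := Ioi t₂))) ?_)
    filter_upwards [Ioc_mem_nhdsGT ht₂b] with t ht using (hpos t ht).le
  obtain ⟨K, hK⟩ := hloc t₂ hzero
  obtain ⟨ε, hε, hball⟩ := Metric.nhds_basis_closedBall.eventually_iff.1 hK
  set t₃ := min (t₂ + ε) b
  have ht₃ : t₃ ∈ Ioc t₂ b := ⟨lt_min (by linarith) ht₂b, min_le_right _ _⟩
  have hnonneg : ∀ t ∈ Icc t₂ t₃, 0 ≤ f t := fun t ht => by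
    rcases ht.1.eq_or_lt with rfl | h
    exacts [hzero.ge, (hpos t ⟨h, ht.2.trans ht₃.2⟩).le]
  refine (hpos t₃ ht₃).ne' (eq_zero_of_abs_deriv_le_mul_abs_self_of_eq_zero_right (K := K)
    hfc.continuousOn (fun t _ => (hf t).hasDerivWithinAt) hzero (fun t ht => ?_) t₃
    ⟨ht₃.1.le, le_rfl⟩)
  have ht := Ico_subset_Icc_self ht
  have hdist : t ∈ Metric.closedBall t₂ ε := by
    rw [Metric.mem_closedBall, Real.dist_eq, abs_of_nonneg (by linarith [ht.1])]
    linarith [ht.2, min_le_left (t₂ + ε) b]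
  rw [Real.norm_eq_abs, Real.norm_eq_abs, abs_of_nonneg (hnonneg t ht)]
  exact hball hdist (hnonneg t ht)

lemma pos_of_local_gronwall {f f' : ℝ → ℝ} (hf : ∀ t, HasDerivAt f (f' t) t)
    (hloc : ∀ t, f t = 0 → ∃ K, ∀ᶠ s in 𝓝 t, 0 ≤ f s → |f' s| ≤ K * f s)
    (h0 : 0 < f 0) (t : ℝ) : 0 < f t := by
  rcases le_total t 0 with ht | ht
  · exact pos_on_Iic_of_local_gronwall hf hloc h0 t ht
  have hg : ∀ s, HasDerivAt (fun s => f (-s)) (-f' (-s)) s := fun s => by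
    simpa [Function.comp_def] using (hf (-s)).comp s (hasDerivAt_neg s)
  have hgloc : ∀ s, f (-s) = 0 → ∃ K, ∀ᶠ u in 𝓝 s, 0 ≤ f (-u) → |-f' (-u)| ≤ K * f (-u) :=
    fun s hs => by
      obtain ⟨K, hK⟩ := hloc (-s) hs
      exact ⟨K, by simpa [abs_neg] using (continuous_neg.tendsto s).eventually hK⟩
  simpa using pos_on_Iic_of_local_gronwall hg hgloc (b := 0) (by simpa using h0) (-t) (by linarith)

lemma pos_of_energy_le {E P f f' : ℝ → ℝ} {c C r δ δ₀ : ℝ} (hc : 0 < c) (hC : 0 ≤ C) (hr : 0 < r)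
    (hδ : 0 < δ) (hδ₀ : 0 < δ₀) (hEpos : ∀ s ≠ 0, 0 < E s)
    (hE : ∀ s, |s| ≤ δ₀ → c * |s| ^ r ≤ E s) (hP : ∀ w, 0 ≤ w → w ≤ δ₀ → P w ≤ C * w ^ r)
    (hf : ∀ t, HasDerivAt f (f' t) t) (hf' : Continuous f')
    (hEP : ∀ t, 0 ≤ f t → f t < δ → E (f' t) ≤ P (f t)) (h0 : 0 < f 0) (t : ℝ) : 0 < f t := by
  -- At a zero `z` of `f`, `E (f' z) ≤ P 0 = 0` forces `f' z = 0`, and near `z` the power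
  -- bounds on `E` and `P` give `|f'| ≤ K f`.
  refine pos_of_local_gronwall hf (fun z hz => ⟨(C / c) ^ r⁻¹, ?_⟩) h0 t
  have hf'z : f' z = 0 := by
    by_contra hne
    have := (hEpos _ hne).trans_le ((hEP z hz.ge (hz ▸ hδ)).trans (hz ▸ hP 0 le_rfl hδ₀.le))
    rw [hz, zero_rpow hr.ne', mul_zero] at this
    exact this.false
  have hfs : ∀ᶠ s in 𝓝 z, f s < min δ δ₀ :=
    (hf z).continuousAt.eventually_lt continuousAt_const (hz ▸ lt_min hδ hδ₀)
  have hf's : ∀ᶠ s in 𝓝 z, |f' s| < δ₀ :=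
    hf'.abs.continuousAt.eventually_lt continuousAt_const (by simpa [hf'z] using hδ₀)
  filter_upwards [hfs, hf's] with s hs hs' hs0
  refine le_rpow_inv_mul_of_mul_rpow_le (abs_nonneg _) hs0 hr hc hC ?_
  calc c * |f' s| ^ r ≤ E (f' s) := hE _ hs'.le
    _ ≤ P (f s) := hEP s hs0 (hs.trans_le (min_le_left _ _))
    _ ≤ C * f s ^ r := hP _ hs0 (hs.le.trans (min_le_right _ _))

lemma exists_seq_tendsto_atTop_deriv_tendsto_zero {q : ℝ → ℝ} {α : ℝ} (hq : Differentiable ℝ q)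
    (hqα : Tendsto q atTop (𝓝 α)) :
    ∃ u : ℕ → ℝ, Tendsto u atTop atTop ∧ Tendsto (fun n => deriv q (u n)) atTop (𝓝 0) := by
  choose u hu hu' using fun n : ℕ =>
    exists_deriv_eq_slope q (lt_add_one (n : ℝ)) hq.continuous.continuousOn hq.differentiableOn
  refine ⟨u, tendsto_atTop_mono (fun n => (hu n).1.le) tendsto_natCast_atTop_atTop, ?_⟩
  have h := (hqα.comp (tendsto_atTop_add_const_right _ 1 tendsto_natCast_atTop_atTop)).sub
    (hqα.comp tendsto_natCast_atTop_atTop)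
  rw [sub_self] at h
  refine h.congr fun n => ?_
  simp [hu' n]

lemma kineticEnergy_deriv_eq {φ V q : ℝ → ℝ} {α : ℝ} (hflux : Continuous (flux φ))
    (hV : Differentiable ℝ V) (hq : Differentiable ℝ q) (hq' : Differentiable ℝ (deriv q))
    (hF : ∀ t, HasDerivAt (fun s => flux φ (deriv q s)) (deriv V (q t)) t)
    (hqα : Tendsto q atTop (𝓝 α)) (hVα : V α = 0) (t : ℝ) :
    kineticEnergy φ (deriv q t) = V (q t) := by
  set H : ℝ → ℝ := fun t => kineticEnergy φ (deriv q t) - V (q t)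
  have hH : ∀ t, HasDerivAt H 0 t := fun t =>
    ((((hq' t).hasDerivAt.mul (hF t)).sub ((hasDerivAt_Phi hflux _).comp t (hq' t).hasDerivAt)).sub
      ((hV (q t)).hasDerivAt.comp t (hq t).hasDerivAt)).congr_deriv (by ring)
  have hconst : ∀ s, H s = H t :=
    fun s => is_const_of_deriv_eq_zero (fun x => (hH x).differentiableAt) (fun x => (hH x).deriv) s t
  obtain ⟨u, hu, hu'⟩ := exists_seq_tendsto_atTop_deriv_tendsto_zero hq hqα
  have hlim : Tendsto (fun n => H (u n)) atTop (𝓝 0) := by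
    have := (((continuous_kineticEnergy hflux).tendsto 0).comp hu').sub
      ((hV.continuous.tendsto α).comp (hqα.comp hu))
    simpa [kineticEnergy_zero, hVα] using this
  have hHt : H t = 0 :=
    tendsto_nhds_unique (tendsto_const_nhds.congr fun n => (hconst (u n)).symm) hlim
  simpa [H, sub_eq_zero] using hHt

lemma deriv_pos_of_deriv_ne_zero {q : ℝ → ℝ} (hq : Differentiable ℝ q) (hq' : Continuous (deriv q))
    (hne : ∀ t, deriv q t ≠ 0) {a b : ℝ} (hab : a < b) (hqab : q a < q b) (t : ℝ) :
    0 < deriv q t := by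
  obtain ⟨ξ, -, hξ⟩ := exists_deriv_eq_slope q hab hq.continuous.continuousOn hq.differentiableOn
  have hξpos : 0 < deriv q ξ := hξ ▸ div_pos (sub_pos.2 hqab) (sub_pos.2 hab)
  by_contra! ht
  obtain ⟨s, hs⟩ := intermediate_value_univ t ξ hq' ⟨ht, hξpos.le⟩
  exact hne s hs

lemma pos_of_kineticEnergy_le_mul_Phi {φ : ℝ → ℝ} {l c₁ c₂ δ₀ r : ℝ} (hflux : Continuous (flux φ))
    (hφd : ∀ t > 0, DifferentiableAt ℝ φ t) (hφpos : ∀ t > 0, 0 < φ t) (hl : 1 < l)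
    (hφ2 : ∀ t > 0, l - 1 ≤ deriv (fun s => φ s * s) t / φ t) (hc₁ : 0 < c₁) (hc₂ : 0 < c₂)
    (hδ₀ : 0 < δ₀) (hr : 1 < r)
    (hφ3 : ∀ t, 0 < t → t ≤ δ₀ → c₁ * t ^ (r - 1) ≤ φ t * t ∧ φ t * t ≤ c₂ * t ^ (r - 1))
    {δ : ℝ} (hδ : 0 < δ) {a : ℝ} (ha : 0 < a) {f f' : ℝ → ℝ} (hf : ∀ t, HasDerivAt f (f' t) t)
    (hf' : Continuous f') (hE : ∀ t, 0 ≤ f t → f t < δ → kineticEnergy φ (f' t) ≤ a * Phi φ (f t))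
    (h0 : 0 < f 0) (t : ℝ) : 0 < f t := by
  have hr0 : 0 < r := by linarith
  refine pos_of_energy_le (P := fun w => a * Phi φ w) (C := a * (c₂ / r))
    (mul_pos (sub_pos.2 hl) (div_pos hc₁ hr0)) (by positivity) hr0 hδ hδ₀
    (fun s hs => kineticEnergy_pos hflux hφd hφpos hl hφ2 hs)
    (fun s hs => rpow_le_kineticEnergy hflux hφd hφpos hl.le hφ2 hr0
      (fun t ht ht' => (hφ3 t ht ht').1) hs)
    (fun w hw hw' => ?_) hf hf' hE h0 t
  rw [mul_assoc]
  exact mul_le_mul_of_nonneg_left (Phi_le_rpow hflux hr0 (fun t ht ht' => (hφ3 t ht ht').2) hw hw')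
    ha.le

lemma deriv_nonpos_of_le_neg_mul {φ V : ℝ → ℝ} (hφpos : ∀ t > 0, 0 < φ t) {α k₁ k₂ : ℝ}
    (hk₁ : 0 < k₁) (hk₂ : 0 < k₂)
    (hV : ∀ x, 0 ≤ x → x ≤ α → deriv V x ≤ -(k₁ * x * φ (k₂ * |x - α|) * |x - α|))
    {x : ℝ} (hx : 0 ≤ x) (hxα : x < α) : deriv V x ≤ 0 := by
  have : 0 < φ (k₂ * |x - α|) := hφpos _ (mul_pos hk₂ (abs_pos.2 (sub_ne_zero.2 hxα.ne)))
  have : 0 ≤ k₁ * x * φ (k₂ * |x - α|) * |x - α| := by positivity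
  linarith [hV x hx hxα.le]

lemma antitoneOn_deriv_of_hasDerivAt_flux_nonpos {φ q W : ℝ → ℝ} (hflux : Continuous (flux φ))
    (hφ1 : ∀ t > 0, 0 < deriv (fun s => φ s * s) t)
    (hF : ∀ t, HasDerivAt (fun s => flux φ (deriv q s)) (W t) t) (hW : ∀ t > 0, W t ≤ 0)
    (hq' : ∀ t, 0 ≤ deriv q t) : AntitoneOn (deriv q) (Ici 0) := by
  have hanti : AntitoneOn (fun t => flux φ (deriv q t)) (Ici 0) := by
    refine antitoneOn_of_deriv_nonpos (convex_Ici 0)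
      (continuous_iff_continuousAt.2 fun t => (hF t).continuousAt).continuousOn
      (fun t _ => (hF t).differentiableAt.differentiableWithinAt) fun t ht => ?_
    rw [interior_Ici] at ht
    exact (hF t).deriv ▸ hW t ht
  exact fun a ha b hb hab =>
    ((strictMonoOn_flux hflux hφ1).le_iff_le (hq' b) (hq' a)).1 (hanti ha hb hab)

theorem statement14_general (φ V : ℝ → ℝ) (l m α : ℝ) (q : ℝ → ℝ)
    (hφC1 : ContDiffOn ℝ 1 φ (Set.Ioi 0))
    (hφpos : ∀ t > 0, 0 < φ t)
    (hφ1 : ∀ t > 0, 0 < deriv (fun s => φ s * s) t)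
    (hl : 1 < l)
    (hφ2 : ∀ t > 0, l - 1 ≤ deriv (fun s => φ s * s) t / φ t ∧
      deriv (fun s => φ s * s) t / φ t ≤ m - 1)
    (hφ3 : ∃ c₁ c₂ δ₀ r : ℝ, 0 < c₁ ∧ 0 < c₂ ∧ 0 < δ₀ ∧ 1 < r ∧
      ∀ t : ℝ, 0 < t → t ≤ δ₀ → c₁ * t ^ (r - 1) ≤ φ t * t ∧ φ t * t ≤ c₂ * t ^ (r - 1))
    (hα : 0 < α)
    (hV1 : ContDiff ℝ 1 V)
    (hV2 : V α = 0 ∧ V (-α) = 0 ∧ ∀ t, -α < t → t < α → 0 < V t)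
    (hV3 : ∃ a₁ a₂ a₃ a₄ δ : ℝ, 0 < a₁ ∧ 0 < a₂ ∧ 0 < a₃ ∧ 0 < a₄ ∧ 0 < δ ∧ δ < α ∧
      (∀ t, α - δ < t → t ≤ α → a₁ * Phi φ |t - α| ≤ V t ∧ V t ≤ a₂ * Phi φ |t - α|) ∧
      (∀ t, -α ≤ t → t < -α + δ → a₃ * Phi φ |t + α| ≤ V t ∧ V t ≤ a₄ * Phi φ |t + α|))
    (hV4 : ∃ k₁ k₂ k₃ k₄ k₅ k₆ k₇ k₈ : ℝ, 0 < k₁ ∧ 0 < k₂ ∧ 0 < k₃ ∧ 0 < k₄ ∧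
      0 < k₅ ∧ 0 < k₆ ∧ 0 < k₇ ∧ 0 < k₈ ∧
      (∀ t, 0 ≤ t → t ≤ α →
        -(k₃ * t * φ (k₄ * |t - α|) * |t - α|) ≤ deriv V t ∧
        deriv V t ≤ -(k₁ * t * φ (k₂ * |t - α|) * |t - α|)) ∧
      (∀ t, -α ≤ t → t ≤ 0 →
        -(k₇ * t * φ (k₈ * |t + α|) * |t + α|) ≤ deriv V t ∧
        deriv V t ≤ -(k₅ * t * φ (k₆ * |t + α|) * |t + α|)))
    (hq : IsHeteroclinic φ V α q) :
    ((∀ s < (0:ℝ), -α < q s ∧ q s < 0) ∧ (∀ t > (0:ℝ), 0 < q t ∧ q t < α)) ∧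
    ((∀ t : ℝ, 0 < deriv q t) ∧ StrictMono q) ∧
    (AntitoneOn (deriv q) (Set.Ici 0) ∧ ConcaveOn ℝ (Set.Ici 0) q) := by
  obtain ⟨c₁, c₂, δ₀, r, hc₁, hc₂, hδ₀, hr, hφ3⟩ := hφ3
  obtain ⟨_, a₂, _, a₄, δ, -, ha₂, -, ha₄, hδ, -, hV3α, hV3nα⟩ := hV3
  obtain ⟨k₁, k₂, _, _, _, _, _, _, hk₁, hk₂, -, -, -, -, -, -, hV4α, -⟩ := hV4
  obtain ⟨⟨hq1, hF⟩, hq2, hq'c, hq0, hqtop, -⟩ := hq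
  obtain ⟨hVα, -, hVpos⟩ := hV2
  have hφd : ∀ t > 0, DifferentiableAt ℝ φ t := fun t ht =>
    (hφC1.contDiffAt (Ioi_mem_nhds ht)).differentiableAt one_ne_zero
  have hφ2l : ∀ t > 0, l - 1 ≤ deriv (fun s => φ s * s) t / φ t := fun t ht => (hφ2 t ht).1
  have hflux : Continuous (flux φ) := continuous_flux hφC1.continuousOn
    (tendsto_mul_nhdsGT_zero_of_le_rpow hφpos hr hδ₀ fun t ht ht' => (hφ3 t ht ht').2)
  have hF' : ∀ t, HasDerivAt (fun s => flux φ (deriv q s)) (deriv V (q t)) t := hF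
  have henergy : ∀ t, kineticEnergy φ (deriv q t) = V (q t) :=
    kineticEnergy_deriv_eq hflux (hV1.differentiable one_ne_zero) hq1 hq2 hF' hqtop hVα
  have hbarrier := @pos_of_kineticEnergy_le_mul_Phi φ l c₁ c₂ δ₀ r hflux hφd hφpos hl hφ2l hc₁ hc₂
    hδ₀ hr hφ3 δ hδ
  have hlt : ∀ t, q t < α := by
    refine fun t => sub_pos.1 (hbarrier ha₂ (fun t => (hq1 t).hasDerivAt.const_sub α) hq'c.neg
      (fun t ht ht' => ?_) (by simpa [hq0]) t)
    have := (hV3α (q t) (by linarith) (by linarith)).2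
    rwa [kineticEnergy_neg, henergy, ← abs_of_nonneg ht, abs_sub_comm]
  have hgt : ∀ t, -α < q t := by
    refine fun t => neg_lt_iff_pos_add.2 (hbarrier ha₄ (fun t => (hq1 t).hasDerivAt.add_const α)
      hq'c (fun t ht ht' => ?_) (by simpa [hq0]) t)
    have := (hV3nα (q t) (by linarith) (by linarith)).2
    rwa [henergy, ← abs_of_nonneg ht]
  have hq'ne : ∀ t, deriv q t ≠ 0 := fun t h =>
    (hVpos _ (hgt t) (hlt t)).ne' (by rw [← henergy, h, kineticEnergy_zero])
  obtain ⟨T, hqT, hT⟩ := ((hqtop.eventually (lt_mem_nhds hα)).and (eventually_gt_atTop 0)).exists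
  have hq'pos : ∀ t, 0 < deriv q t := deriv_pos_of_deriv_ne_zero hq1 hq'c hq'ne hT (by rwa [hq0])
  have hmono : StrictMono q := strictMono_of_deriv_pos hq'pos
  have hanti : AntitoneOn (deriv q) (Ici 0) :=
    antitoneOn_deriv_of_hasDerivAt_flux_nonpos hflux hφ1 hF' (fun t ht =>
      deriv_nonpos_of_le_neg_mul hφpos hk₁ hk₂ (fun x h0 h1 => (hV4α x h0 h1).2)
        (hq0 ▸ hmono ht).le (hlt t)) fun t => (hq'pos t).le
  refine ⟨⟨fun s hs => ⟨hgt s, hq0 ▸ hmono hs⟩, fun t ht => ⟨hq0 ▸ hmono ht, hlt t⟩⟩,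
    ⟨hq'pos, hmono⟩, hanti, ?_⟩
  exact AntitoneOn.concaveOn_of_deriv (convex_Ici 0) hq1.continuous.continuousOn
    hq1.differentiableOn (by rw [interior_Ici]; exact hanti.mono Ioi_subset_Ici_self)

theorem statement14 (φ V : ℝ → ℝ) (l m α : ℝ) (q : ℝ → ℝ)
    (hφC1 : ContDiffOn ℝ 1 φ (Set.Ioi 0))
    (hφpos : ∀ t > 0, 0 < φ t)
    (hφ1 : ∀ t > 0, 0 < deriv (fun s => φ s * s) t)
    (hl : 1 < l) (hlm : l ≤ m)
    (hφ2 : ∀ t > 0, l - 1 ≤ deriv (fun s => φ s * s) t / φ t ∧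
      deriv (fun s => φ s * s) t / φ t ≤ m - 1)
    (hφ3 : ∃ c₁ c₂ δ₀ r : ℝ, 0 < c₁ ∧ 0 < c₂ ∧ 0 < δ₀ ∧ 1 < r ∧
      ∀ t : ℝ, 0 < t → t ≤ δ₀ → c₁ * t ^ (r - 1) ≤ φ t * t ∧ φ t * t ≤ c₂ * t ^ (r - 1))
    (hα : 0 < α)
    (hV1 : ContDiff ℝ 1 V) (hVnn : ∀ t, 0 ≤ V t)
    (hV2 : V α = 0 ∧ V (-α) = 0 ∧ ∀ t, -α < t → t < α → 0 < V t)
    (hV3 : ∃ a₁ a₂ a₃ a₄ δ : ℝ, 0 < a₁ ∧ 0 < a₂ ∧ 0 < a₃ ∧ 0 < a₄ ∧ 0 < δ ∧ δ < α ∧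
      (∀ t, α - δ < t → t ≤ α → a₁ * Phi φ |t - α| ≤ V t ∧ V t ≤ a₂ * Phi φ |t - α|) ∧
      (∀ t, -α ≤ t → t < -α + δ → a₃ * Phi φ |t + α| ≤ V t ∧ V t ≤ a₄ * Phi φ |t + α|))
    (hV4 : ∃ k₁ k₂ k₃ k₄ k₅ k₆ k₇ k₈ : ℝ, 0 < k₁ ∧ 0 < k₂ ∧ 0 < k₃ ∧ 0 < k₄ ∧
      0 < k₅ ∧ 0 < k₆ ∧ 0 < k₇ ∧ 0 < k₈ ∧
      (∀ t, 0 ≤ t → t ≤ α →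
        -(k₃ * t * φ (k₄ * |t - α|) * |t - α|) ≤ deriv V t ∧
        deriv V t ≤ -(k₁ * t * φ (k₂ * |t - α|) * |t - α|)) ∧
      (∀ t, -α ≤ t → t ≤ 0 →
        -(k₇ * t * φ (k₈ * |t + α|) * |t + α|) ≤ deriv V t ∧
        deriv V t ≤ -(k₅ * t * φ (k₆ * |t + α|) * |t + α|)))
    (hV5 : ∃ ρ > 0, StrictConvexOn ℝ (Set.Ioo (-α - ρ) (-α + ρ)) V ∧
      StrictConvexOn ℝ (Set.Ioo (α - ρ) (α + ρ)) V)
    (hq : IsHeteroclinic φ V α q)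
    (huniq : ∀ u : ℝ → ℝ, IsHeteroclinic φ V α u → u = q) :
    ((∀ s < (0:ℝ), -α < q s ∧ q s < 0) ∧ (∀ t > (0:ℝ), 0 < q t ∧ q t < α)) ∧
    ((∀ t : ℝ, 0 < deriv q t) ∧ StrictMono q) ∧
    (AntitoneOn (deriv q) (Set.Ici 0) ∧ ConcaveOn ℝ (Set.Ici 0) q) :=
  statement14_general φ V l m α q hφC1 hφpos hφ1 hl hφ2 hφ3 hα hV1 hV2 hV3 hV4 hq
end
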